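/- Let 0 < m ≤ M. For every price sequence σ of length n ≥ 1 with all prices in [m, M], the reservation-price strategy with reservation price √(mM) satisfies max_k σ k ≤ √(M/m) · profit(RPP(√(mM)), σ); that is, the deterministic algorithm RPP(√(mM)) is √(M/m)-competitive for online search. -/

import Mathlib

/-- The maximum price of a price sequence of positive length. -/
noncomputable def maxPrice {n : ℕ} (hn : 0 < n) (σ : Fin n → ℝ) : ℝ :=
  Finset.univ.sup' ⟨⟨0, hn⟩, Finset.mem_univ _⟩ σ

/-- The profit of the reservation-price strategy `RPP p` on the price sequence
`σ`: it accepts at the least index `k` with `σ k ≥ p`, obtaining `σ k`; if no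
such index exists it must accept the last price `σ (n-1)`. -/
noncomputable def rppProfit {n : ℕ} (hn : 0 < n) (p : ℝ) (σ : Fin n → ℝ) : ℝ :=
  if h : ∃ k : Fin n, p ≤ σ k then
    σ ((Finset.univ.filter (fun k : Fin n => p ≤ σ k)).min'
      (h.imp fun k hk => Finset.mem_filter.mpr ⟨Finset.mem_univ _, hk⟩))
  else σ ⟨n - 1, Nat.sub_lt hn one_pos⟩

/-!
If some price reaches the reservation price `p`, the strategy earns at least `p` while the
optimum is at most `M`; otherwise the optimum is below `p` while the strategy still earns at
least `m`. So `RPP p` is `c`-competitive as soon as `M ≤ c p` and `p ≤ c m`, and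
`p = √(mM)` balances the two ratios at `c = √(M/m)`.
-/

section ReservationPrice

variable {n : ℕ} (hn : 0 < n) (σ : Fin n → ℝ)

theorem maxPrice_le {c : ℝ} (h : ∀ i, σ i ≤ c) : maxPrice hn σ ≤ c :=
  Finset.sup'_le _ _ fun i _ => h i

theorem exists_rppProfit_eq (p : ℝ) : ∃ k, rppProfit hn p σ = σ k := by
  unfold rppProfit
  split_ifs
  exacts [⟨_, rfl⟩, ⟨_, rfl⟩]

theorem le_rppProfit_of_exists {p : ℝ} (h : ∃ k, p ≤ σ k) : p ≤ rppProfit hn p σ := by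
  rw [rppProfit, dif_pos h]
  exact (Finset.mem_filter.mp (Finset.min'_mem (Finset.univ.filter fun k => p ≤ σ k) _)).2

theorem maxPrice_le_mul_rppProfit {m M p c : ℝ} (hc : 0 ≤ c)
    (hσ : ∀ i, m ≤ σ i ∧ σ i ≤ M) (hMp : M ≤ c * p) (hpm : p ≤ c * m) :
    maxPrice hn σ ≤ c * rppProfit hn p σ := by
  by_cases h : ∃ k, p ≤ σ k
  · calc maxPrice hn σ ≤ M := maxPrice_le hn σ fun i => (hσ i).2
      _ ≤ c * p := hMp
      _ ≤ c * rppProfit hn p σ := by gcongr; exact le_rppProfit_of_exists hn σ h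
  · simp only [not_exists, not_le] at h
    obtain ⟨k, hk⟩ := exists_rppProfit_eq hn σ p
    calc maxPrice hn σ ≤ p := maxPrice_le hn σ fun i => (h i).le
      _ ≤ c * m := hpm
      _ ≤ c * rppProfit hn p σ := by gcongr; exact hk ▸ (hσ k).1

end ReservationPrice

theorem sqrt_div_mul_sqrt_mul {m M : ℝ} (hm : 0 < m) (hM : 0 ≤ M) :
    √(M / m) * √(m * M) = M := by
  rw [← Real.sqrt_mul (by positivity), div_mul_eq_mul_div, mul_left_comm,
    mul_div_cancel_left₀ _ hm.ne', Real.sqrt_mul_self hM]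

theorem sqrt_div_mul_self {m M : ℝ} (hm : 0 < m) : √(M / m) * m = √(m * M) := by
  have h : M / m * m ^ 2 = m * M := by field_simp
  rw [← h, Real.sqrt_mul' _ (sq_nonneg m), Real.sqrt_sq hm.le]

/-- The reservation-price strategy with reservation price
`√(mM)` is `√(M/m)`-competitive for online search. -/
theorem rpp_sqrt_is_sqrt_competitive
    (m M : ℝ) (hm : 0 < m) (hmM : m ≤ M)
    (n : ℕ) (hn : 0 < n) (σ : Fin n → ℝ) (hσ : ∀ i, m ≤ σ i ∧ σ i ≤ M) :
    maxPrice hn σ ≤ Real.sqrt (M / m) * rppProfit hn (Real.sqrt (m * M)) σ :=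
  maxPrice_le_mul_rppProfit hn σ (Real.sqrt_nonneg _) hσ
    (sqrt_div_mul_sqrt_mul hm (hm.le.trans hmM)).ge (sqrt_div_mul_self hm).ge
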